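/- arXiv:2502.02554 — 5 statements merged into one kernel-verified Lean document; each statement's English description precedes it below -/
import Mathlib

section
/- Let L ≥ 2 be an integer. For x, y ∈ ℕ³ set Γ(x,y) := 1_{x=y} − L^{−3}·1_{⌊x/L⌋=⌊y/L⌋} (componentwise integer division), and G(x,y) := Σ_{m=0}^∞ L^{−m}·Γ(⌊x/L^m⌋, ⌊y/L^m⌋), a convergent series. Let Λ_n := {0,…,L^n−1}³ and X_n := Σ_{x,y∈Λ_n, x≠y} G(x,y)⁴. Then: (i) G(x,y) = L^{−1}·G(⌊x/L⌋, ⌊y/L⌋) + Γ(x,y) for all x, y ∈ ℕ³; (ii) X_n = L²·X_{n−1} + L^{3(n−1)}·X_1 for every n ≥ 1 (with X_0 = 0); (iii) consequently X_n = X_1·L^{3(n−1)}·(1 − L^{−n})/(1 − L^{−1}) for every n ≥ 1. -/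
open Filter

/-- Componentwise integer division by `L`. -/
def xdiv3 (L : ℕ) (x : ℕ × ℕ × ℕ) : ℕ × ℕ × ℕ := (x.1 / L, x.2.1 / L, x.2.2 / L)

/-- Componentwise integer division by `L^m`, i.e. `⌊x/L^m⌋`. -/
def divIter3 (L m : ℕ) (x : ℕ × ℕ × ℕ) : ℕ × ℕ × ℕ :=
  (x.1 / L ^ m, x.2.1 / L ^ m, x.2.2 / L ^ m)

/-- The single-scale covariance `Γ(x,y) = 1_{x=y} - L^{-3}·1_{⌊x/L⌋=⌊y/L⌋}`. -/
noncomputable def ΓHier (L : ℕ) (x y : ℕ × ℕ × ℕ) : ℝ :=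
  (if x = y then 1 else 0) - ((L : ℝ) ^ 3)⁻¹ * (if xdiv3 L x = xdiv3 L y then 1 else 0)

/-- The hierarchical Green's function `G(x,y) = Σ_m L^{-m}·Γ(⌊x/L^m⌋, ⌊y/L^m⌋)`. -/
noncomputable def GHier (L : ℕ) (x y : ℕ × ℕ × ℕ) : ℝ :=
  ∑' m : ℕ, ((L : ℝ) ^ m)⁻¹ * ΓHier L (divIter3 L m x) (divIter3 L m y)

/-- The block `Λ_n = {0,…,L^n-1}³`. -/
def Λ3 (L n : ℕ) : Finset (ℕ × ℕ × ℕ) :=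
  Finset.range (L ^ n) ×ˢ (Finset.range (L ^ n) ×ˢ Finset.range (L ^ n))

/-- `X_n = Σ_{x≠y∈Λ_n} G(x,y)⁴`. -/
noncomputable def XHier (L n : ℕ) : ℝ :=
  ∑ x ∈ Λ3 L n, ∑ y ∈ Λ3 L n, if x ≠ y then (GHier L x y) ^ 4 else 0

/-! ### Auxiliary lemmas -/

lemma Gamma_abs_le (L : ℕ) (hL : 2 ≤ L) (x y : ℕ × ℕ × ℕ) : |ΓHier L x y| ≤ 1 := by
  have h1 : (1:ℝ) ≤ (L:ℝ) ^ 3 := one_le_pow₀ (by exact_mod_cast hL.trans' one_le_two)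
  have h0 : (0:ℝ) < (L:ℝ) ^ 3 := by positivity
  have h2 : ((L:ℝ) ^ 3)⁻¹ ≤ 1 := inv_le_one_of_one_le₀ h1
  have h3 : (0:ℝ) ≤ ((L:ℝ) ^ 3)⁻¹ := by positivity
  rw [ΓHier, abs_le]
  constructor <;> split_ifs <;> simp <;> linarith

lemma summable_G (L : ℕ) (hL : 2 ≤ L) (x y : ℕ × ℕ × ℕ) :
    Summable (fun m : ℕ => ((L : ℝ) ^ m)⁻¹ * ΓHier L (divIter3 L m x) (divIter3 L m y)) := by
  have hL1 : (1:ℝ) < (L:ℝ) := by exact_mod_cast hL.trans_lt' one_lt_two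
  have hg : Summable (fun m : ℕ => ((L:ℝ)⁻¹) ^ m) :=
    summable_geometric_of_lt_one (by positivity) (inv_lt_one_of_one_lt₀ hL1)
  refine Summable.of_norm_bounded hg fun m => ?_
  rw [norm_mul]
  have h1 : ‖((L : ℝ) ^ m)⁻¹‖ = ((L:ℝ)⁻¹) ^ m := by
    rw [Real.norm_eq_abs, abs_of_nonneg (by positivity), inv_pow]
  rw [h1]
  calc ((L:ℝ)⁻¹) ^ m * ‖ΓHier L (divIter3 L m x) (divIter3 L m y)‖
      ≤ ((L:ℝ)⁻¹) ^ m * 1 := by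
        exact mul_le_mul_of_nonneg_left (Gamma_abs_le L hL _ _) (by positivity)
    _ = ((L:ℝ)⁻¹) ^ m := mul_one _

lemma divIter_zero (L : ℕ) (x : ℕ × ℕ × ℕ) : divIter3 L 0 x = x := by
  simp [divIter3]

lemma divIter_succ (L m : ℕ) (x : ℕ × ℕ × ℕ) :
    divIter3 L m (xdiv3 L x) = divIter3 L (m + 1) x := by
  simp [divIter3, xdiv3, Nat.div_div_eq_div_mul, pow_succ, mul_comm]

lemma G_rec (L : ℕ) (hL : 2 ≤ L) (x y : ℕ × ℕ × ℕ) :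
    GHier L x y = (L : ℝ)⁻¹ * GHier L (xdiv3 L x) (xdiv3 L y) + ΓHier L x y := by
  have hs := summable_G L hL x y
  rw [GHier, Summable.tsum_eq_zero_add hs]
  have h0 : ((L : ℝ) ^ 0)⁻¹ * ΓHier L (divIter3 L 0 x) (divIter3 L 0 y) = ΓHier L x y := by
    simp [divIter_zero]
  rw [h0, add_comm]
  congr 1
  have : ∀ m : ℕ, ((L : ℝ) ^ (m+1))⁻¹ * ΓHier L (divIter3 L (m+1) x) (divIter3 L (m+1) y)
      = (L:ℝ)⁻¹ * (((L : ℝ) ^ m)⁻¹ *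
        ΓHier L (divIter3 L m (xdiv3 L x)) (divIter3 L m (xdiv3 L y))) := by
    intro m
    rw [divIter_succ, divIter_succ, pow_succ, mul_inv]
    ring
  rw [tsum_congr this, tsum_mul_left, GHier]

lemma G_diag (L : ℕ) (x y : ℕ × ℕ × ℕ) : GHier L x x = GHier L y y := by
  rw [GHier, GHier]
  refine tsum_congr fun m => ?_
  simp [ΓHier]

lemma G_near (L : ℕ) (hL : 2 ≤ L) (x y : ℕ × ℕ × ℕ) (hxy : x ≠ y)
    (hd : xdiv3 L x = xdiv3 L y) :
    GHier L x y = (L : ℝ)⁻¹ * GHier L (0,0,0) (0,0,0) - ((L : ℝ) ^ 3)⁻¹ := by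
  rw [G_rec L hL, hd, G_diag L (xdiv3 L y) (0,0,0), ΓHier, if_neg hxy, if_pos (by rw [hd])]
  ring

/-- Combine a coarse point and a fine point. -/
def emb3 (L : ℕ) (q r : ℕ × ℕ × ℕ) : ℕ × ℕ × ℕ :=
  (L * q.1 + r.1, L * q.2.1 + r.2.1, L * q.2.2 + r.2.2)

lemma mem_Λ3 (L n : ℕ) (x : ℕ × ℕ × ℕ) :
    x ∈ Λ3 L n ↔ x.1 < L ^ n ∧ x.2.1 < L ^ n ∧ x.2.2 < L ^ n := by
  simp [Λ3]

lemma emb3_div (L : ℕ) (hL : 2 ≤ L) (q r : ℕ × ℕ × ℕ) (hr : r ∈ Λ3 L 1) :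
    xdiv3 L (emb3 L q r) = q := by
  rw [mem_Λ3] at hr
  simp only [pow_one] at hr
  have h : ∀ a b : ℕ, b < L → (L * a + b) / L = a := fun a b hb => by
    rw [Nat.mul_add_div (by omega), Nat.div_eq_of_lt hb, add_zero]
  obtain ⟨q1, q2, q3⟩ := q
  simp [xdiv3, emb3, h _ _ hr.1, h _ _ hr.2.1, h _ _ hr.2.2]

lemma emb3_inj (L : ℕ) (hL : 2 ≤ L) (q r q' r' : ℕ × ℕ × ℕ) (hr : r ∈ Λ3 L 1)
    (hr' : r' ∈ Λ3 L 1) (h : emb3 L q r = emb3 L q' r') : q = q' ∧ r = r' := by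
  have hq : q = q' := by
    rw [← emb3_div L hL q r hr, ← emb3_div L hL q' r' hr', h]
  refine ⟨hq, ?_⟩
  subst hq
  rw [emb3, emb3, Prod.mk.injEq, Prod.mk.injEq] at h
  obtain ⟨r1, r2, r3⟩ := r
  obtain ⟨s1, s2, s3⟩ := r'
  simp_all

lemma sum_range_mul' {M : Type*} [AddCommMonoid M] (g : ℕ → M) (K N : ℕ) :
    ∑ a ∈ Finset.range (K * N), g a = ∑ b ∈ Finset.range N, ∑ c ∈ Finset.range K, g (K * b + c) := by
  induction N with
  | zero => simp
  | succ N ih =>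
      rw [Nat.mul_succ, Finset.sum_range_add, ih, Finset.sum_range_succ]

lemma sum_L3 (L : ℕ) (hL : 2 ≤ L) (n : ℕ) (f : ℕ × ℕ × ℕ → ℝ) :
    ∑ x ∈ Λ3 L (n + 1), f x = ∑ q ∈ Λ3 L n, ∑ r ∈ Λ3 L 1, f (emb3 L q r) := by
  have hL0 : 0 < L := by omega
  rw [← Finset.sum_product']
  refine Finset.sum_nbij' (i := fun x => ((x.1 / L, x.2.1 / L, x.2.2 / L),
      (x.1 % L, x.2.1 % L, x.2.2 % L))) (j := fun p => emb3 L p.1 p.2) ?_ ?_ ?_ ?_ ?_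
  · intro x hx
    rw [mem_Λ3] at hx
    simp only [Finset.mem_product, mem_Λ3, pow_one]
    refine ⟨⟨?_, ?_, ?_⟩, Nat.mod_lt _ hL0, Nat.mod_lt _ hL0, Nat.mod_lt _ hL0⟩ <;>
      · rw [Nat.div_lt_iff_lt_mul hL0, ← pow_succ]
        tauto
  · intro p hp
    simp only [Finset.mem_product, mem_Λ3, pow_one] at hp
    obtain ⟨⟨h1, h2, h3⟩, h4, h5, h6⟩ := hp
    have hc : ∀ a b : ℕ, a < L ^ n → b < L → L * a + b < L ^ (n + 1) := by
      intro a b ha hb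
      calc L * a + b < L * (a + 1) := by rw [Nat.mul_succ]; omega
        _ ≤ L * L ^ n := Nat.mul_le_mul_left L ha
        _ = L ^ (n + 1) := (pow_succ' L n).symm
    rw [mem_Λ3]
    exact ⟨hc _ _ h1 h4, hc _ _ h2 h5, hc _ _ h3 h6⟩
  · intro x _
    simp [emb3, Nat.div_add_mod]
  · intro p hp
    simp only [Finset.mem_product, mem_Λ3, pow_one] at hp
    obtain ⟨⟨h1, h2, h3⟩, h4, h5, h6⟩ := hp
    have hdiv : ∀ a b : ℕ, b < L → (L * a + b) / L = a := fun a b hb => by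
      rw [Nat.mul_add_div hL0, Nat.div_eq_of_lt hb, add_zero]
    have hmod : ∀ a b : ℕ, b < L → (L * a + b) % L = b := fun a b hb => by
      rw [Nat.mul_add_mod, Nat.mod_eq_of_lt hb]
    simp [emb3, hdiv _ _ h4, hdiv _ _ h5, hdiv _ _ h6,
      hmod _ _ h4, hmod _ _ h5, hmod _ _ h6]
  · intro x _
    congr 1
    simp [emb3, Nat.div_add_mod]

lemma X_zero (L : ℕ) : XHier L 0 = 0 := by
  simp [XHier, Λ3]

lemma X_rec (L : ℕ) (hL : 2 ≤ L) (n : ℕ) :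
    XHier L (n + 1) = (L : ℝ) ^ 2 * XHier L n + (L : ℝ) ^ (3 * n) * XHier L 1 := by
  have hL0 : 0 < L := by omega
  have hLR : (0:ℝ) < (L:ℝ) := by positivity
  set d : ℝ := (L:ℝ)⁻¹ * GHier L (0,0,0) (0,0,0) - ((L:ℝ)^3)⁻¹ with hdd
  have hdivΛ1 : ∀ r ∈ Λ3 L 1, xdiv3 L r = (0,0,0) := by
    intro r hr
    rw [mem_Λ3] at hr
    simp only [pow_one] at hr
    simp [xdiv3, Nat.div_eq_of_lt hr.1, Nat.div_eq_of_lt hr.2.1, Nat.div_eq_of_lt hr.2.2]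
  have hX1 : XHier L 1 = ∑ r ∈ Λ3 L 1, ∑ r' ∈ Λ3 L 1, if r ≠ r' then d^4 else 0 := by
    rw [XHier]
    refine Finset.sum_congr rfl fun r hr => Finset.sum_congr rfl fun r' hr' => ?_
    by_cases h : r = r'
    · simp [h]
    · rw [if_pos h, if_pos h, G_near L hL r r' h (by rw [hdivΛ1 r hr, hdivΛ1 r' hr'])]
  have hcard1 : (Λ3 L 1).card = L ^ 3 := by
    simp [Λ3]
    ring
  have hcardn : (Λ3 L n).card = L ^ (3 * n) := by
    simp [Λ3]
    ring
  have key : ∀ q q' r r', r ∈ Λ3 L 1 → r' ∈ Λ3 L 1 →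
      (if emb3 L q r ≠ emb3 L q' r' then GHier L (emb3 L q r) (emb3 L q' r') ^ 4 else 0)
      = if q ≠ q' then ((L:ℝ)⁻¹ * GHier L q q')^4 else (if r ≠ r' then d^4 else 0) := by
    intro q q' r r' hr hr'
    by_cases hq : q = q'
    · subst hq
      by_cases hrr : r = r'
      · subst hrr
        simp
      · have hne : emb3 L q r ≠ emb3 L q r' := fun h => hrr (emb3_inj L hL q r q r' hr hr' h).2
        rw [if_pos hne, if_neg (by simp), if_pos hrr,
          G_near L hL _ _ hne (by rw [emb3_div L hL q r hr, emb3_div L hL q r' hr'])]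
    · have hne : emb3 L q r ≠ emb3 L q' r' := fun h => hq (emb3_inj L hL q r q' r' hr hr' h).1
      rw [if_pos hne, if_pos hq]
      have hG : GHier L (emb3 L q r) (emb3 L q' r') = (L:ℝ)⁻¹ * GHier L q q' := by
        rw [G_rec L hL, emb3_div L hL q r hr, emb3_div L hL q' r' hr', ΓHier, if_neg hne,
          if_neg (by rw [emb3_div L hL q r hr, emb3_div L hL q' r' hr']; exact hq)]
        ring
      rw [hG]
  have main : XHier L (n + 1) = ∑ q ∈ Λ3 L n, ∑ q' ∈ Λ3 L n,
      ((if q ≠ q' then (L:ℝ)^2 * GHier L q q' ^ 4 else 0)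
        + (if q = q' then XHier L 1 else 0)) := by
    rw [XHier, sum_L3 L hL n]
    have inner : ∀ q ∈ Λ3 L n, ∀ r ∈ Λ3 L 1,
        ∑ y ∈ Λ3 L (n+1), (if emb3 L q r ≠ y then GHier L (emb3 L q r) y ^ 4 else 0)
        = ∑ q' ∈ Λ3 L n, ∑ r' ∈ Λ3 L 1,
            (if q ≠ q' then ((L:ℝ)⁻¹ * GHier L q q')^4 else (if r ≠ r' then d^4 else 0)) := by
      intro q hq r hr
      rw [sum_L3 L hL n]
      exact Finset.sum_congr rfl fun q' hq' => Finset.sum_congr rfl fun r' hr' =>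
        key q q' r r' hr hr'
    calc ∑ q ∈ Λ3 L n, ∑ r ∈ Λ3 L 1,
          ∑ y ∈ Λ3 L (n+1), (if emb3 L q r ≠ y then GHier L (emb3 L q r) y ^ 4 else 0)
        = ∑ q ∈ Λ3 L n, ∑ r ∈ Λ3 L 1, ∑ q' ∈ Λ3 L n, ∑ r' ∈ Λ3 L 1,
            (if q ≠ q' then ((L:ℝ)⁻¹ * GHier L q q')^4 else (if r ≠ r' then d^4 else 0)) := by
          exact Finset.sum_congr rfl fun q hq => Finset.sum_congr rfl fun r hr => inner q hq r hr
      _ = ∑ q ∈ Λ3 L n, ∑ q' ∈ Λ3 L n, ∑ r ∈ Λ3 L 1, ∑ r' ∈ Λ3 L 1,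
            (if q ≠ q' then ((L:ℝ)⁻¹ * GHier L q q')^4 else (if r ≠ r' then d^4 else 0)) := by
          exact Finset.sum_congr rfl fun q hq => Finset.sum_comm
      _ = ∑ q ∈ Λ3 L n, ∑ q' ∈ Λ3 L n,
            ((if q ≠ q' then (L:ℝ)^2 * GHier L q q' ^ 4 else 0)
              + (if q = q' then XHier L 1 else 0)) := by
          refine Finset.sum_congr rfl fun q hq => Finset.sum_congr rfl fun q' hq' => ?_
          by_cases hq2 : q = q'
          · subst hq2
            have h1 : ∀ r r' : ℕ × ℕ × ℕ,
                (if q ≠ q then ((L:ℝ)⁻¹ * GHier L q q)^4 else (if r ≠ r' then d^4 else 0))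
                = (if r ≠ r' then d^4 else 0) := fun r r' => if_neg (by simp)
            simp only [h1]
            rw [← hX1]
            simp
          · have h1 : ∀ r r' : ℕ × ℕ × ℕ,
                (if q ≠ q' then ((L:ℝ)⁻¹ * GHier L q q')^4 else (if r ≠ r' then d^4 else 0))
                = ((L:ℝ)⁻¹ * GHier L q q')^4 := fun r r' => if_pos hq2
            simp only [h1, Finset.sum_const, nsmul_eq_mul, hcard1]
            rw [if_pos hq2, if_neg hq2, add_zero]
            push_cast
            field_simp
  rw [main]
  simp only [Finset.sum_add_distrib]
  have hA : ∑ q ∈ Λ3 L n, ∑ q' ∈ Λ3 L n, (if q ≠ q' then (L:ℝ)^2 * GHier L q q' ^ 4 else 0)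
      = (L:ℝ)^2 * XHier L n := by
    rw [XHier, Finset.mul_sum]
    refine Finset.sum_congr rfl fun q _ => ?_
    rw [Finset.mul_sum]
    refine Finset.sum_congr rfl fun q' _ => ?_
    rw [mul_ite, mul_zero]
  have hB : ∑ q ∈ Λ3 L n, ∑ q' ∈ Λ3 L n, (if q = q' then XHier L 1 else 0)
      = (L:ℝ)^(3*n) * XHier L 1 := by
    have h1 : ∀ q ∈ Λ3 L n, ∑ q' ∈ Λ3 L n, (if q = q' then XHier L 1 else 0) = XHier L 1 := by
      intro q hq
      rw [Finset.sum_ite_eq (Λ3 L n) q (fun _ => XHier L 1), if_pos hq]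
    rw [Finset.sum_congr rfl h1, Finset.sum_const, hcardn, nsmul_eq_mul]
    push_cast
    ring
  rw [hA, hB]

theorem stmt13 (L : ℕ) (hL : 2 ≤ L) :
    -- (i) the one-step recursion for G
    (∀ x y : ℕ × ℕ × ℕ,
      GHier L x y = (L : ℝ)⁻¹ * GHier L (xdiv3 L x) (xdiv3 L y) + ΓHier L x y) ∧
    -- (with X₀ = 0)
    XHier L 0 = 0 ∧
    -- (ii) the recursion for X_n
    (∀ n : ℕ, 1 ≤ n →
      XHier L n = (L : ℝ) ^ 2 * XHier L (n - 1) + (L : ℝ) ^ (3 * (n - 1)) * XHier L 1) ∧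
    -- (iii) the closed form
    (∀ n : ℕ, 1 ≤ n →
      XHier L n = XHier L 1 * (L : ℝ) ^ (3 * (n - 1)) * (1 - ((L : ℝ) ^ n)⁻¹)
        / (1 - (L : ℝ)⁻¹)) := by
  have hL1 : (1:ℝ) < (L:ℝ) := by exact_mod_cast hL.trans_lt' one_lt_two
  have hL0 : (L:ℝ) ≠ 0 := by positivity
  have hinv : (1:ℝ) - (L:ℝ)⁻¹ ≠ 0 := by
    have : (L:ℝ)⁻¹ < 1 := inv_lt_one_of_one_lt₀ hL1
    linarith
  refine ⟨G_rec L hL, X_zero L, ?_, ?_⟩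
  · intro n hn
    obtain ⟨m, rfl⟩ : ∃ m, n = m + 1 := ⟨n - 1, (Nat.succ_pred_eq_of_pos hn).symm⟩
    simpa using X_rec L hL m
  · intro n hn
    obtain ⟨m, rfl⟩ : ∃ m, n = m + 1 := ⟨n - 1, (Nat.succ_pred_eq_of_pos hn).symm⟩
    simp only [Nat.add_sub_cancel]
    induction m with
    | zero =>
        rw [pow_one, mul_zero, pow_zero, mul_one, mul_div_assoc, div_self hinv, mul_one]
    | succ k ih =>
        rw [X_rec L hL (k + 1), ih (by omega)]
        have hk : ((L:ℝ) ^ (k+1)) ≠ 0 := by positivity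
        have hk2 : ((L:ℝ) ^ (k+1+1)) ≠ 0 := by positivity
        have hm : (L:ℝ) - 1 ≠ 0 := by linarith
        have e1 : (1 : ℝ) - (L:ℝ)⁻¹ = ((L:ℝ) - 1) / L := by field_simp
        have e2 : (1 : ℝ) - ((L:ℝ)^(k+1))⁻¹ = ((L:ℝ)^(k+1) - 1) / (L:ℝ)^(k+1) := by
          field_simp
        have e3 : (1 : ℝ) - ((L:ℝ)^(k+1+1))⁻¹ = ((L:ℝ)^(k+1+1) - 1) / (L:ℝ)^(k+1+1) := by
          field_simp
        rw [e1, e2, e3]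
        field_simp
        ring
end

section
/- Let μ be a probability measure on a measurable space, let H be a measurable real-valued function such that e^{−H} is μ-integrable, set Z := ∫ e^{−H} dμ (so Z > 0 provided μ is nonzero), and let ν be the probability measure with dν/dμ = Z^{−1}·e^{−H}. Then for all reals b < a: ν({H ≥ a})·μ({H ≤ b}) ≤ e^{−(a−b)}. In particular, if μ({H ≤ b}) > 0 then ν({H ≥ a}) ≤ e^{b−a}/μ({H ≤ b}). -/
open MeasureTheory Filter

theorem stmt15 {Ω : Type*} [MeasurableSpace Ω] (μ : Measure Ω) [IsProbabilityMeasure μ]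
    (H : Ω → ℝ) (hH : Measurable H)
    (hint : Integrable (fun ω => Real.exp (-(H ω))) μ)
    (ν : Measure Ω)
    (hν : ν = μ.withDensity fun ω =>
      ENNReal.ofReal ((∫ ω', Real.exp (-(H ω')) ∂μ)⁻¹ * Real.exp (-(H ω))))
    (a b : ℝ) (hab : b < a) :
    -- Z > 0 (μ being a probability measure is nonzero)
    0 < ∫ ω', Real.exp (-(H ω')) ∂μ ∧
    ν {ω | a ≤ H ω} * μ {ω | H ω ≤ b} ≤ ENNReal.ofReal (Real.exp (-(a - b))) ∧
    (0 < μ {ω | H ω ≤ b} →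
      ν {ω | a ≤ H ω} ≤ ENNReal.ofReal (Real.exp (b - a)) / μ {ω | H ω ≤ b}) := by
  set Z := ∫ ω', Real.exp (-(H ω')) ∂μ with hZdef
  have hZpos : 0 < Z := integral_exp_pos hint
  have hmeasA : MeasurableSet {ω | a ≤ H ω} := measurableSet_le measurable_const hH
  have hmeasB : MeasurableSet {ω | H ω ≤ b} := measurableSet_le hH measurable_const
  -- bound on ν {a ≤ H}
  have key1 : ν {ω | a ≤ H ω} ≤ ENNReal.ofReal (Z⁻¹ * Real.exp (-a)) := by
    rw [hν, withDensity_apply _ hmeasA]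
    calc ∫⁻ ω in {ω | a ≤ H ω}, ENNReal.ofReal (Z⁻¹ * Real.exp (-(H ω))) ∂μ
        ≤ ∫⁻ _ω in {ω | a ≤ H ω}, ENNReal.ofReal (Z⁻¹ * Real.exp (-a)) ∂μ := by
          refine setLIntegral_mono' hmeasA fun ω hω => ?_
          exact ENNReal.ofReal_le_ofReal (by
            have : Real.exp (-(H ω)) ≤ Real.exp (-a) := Real.exp_le_exp.2 (neg_le_neg hω)
            nlinarith [inv_nonneg.2 hZpos.le])
      _ = ENNReal.ofReal (Z⁻¹ * Real.exp (-a)) * μ {ω | a ≤ H ω} := setLIntegral_const _ _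
      _ ≤ ENNReal.ofReal (Z⁻¹ * Real.exp (-a)) * 1 := by
          gcongr
          exact prob_le_one
      _ = ENNReal.ofReal (Z⁻¹ * Real.exp (-a)) := mul_one _
  -- bound on μ {H ≤ b}
  have key2 : μ {ω | H ω ≤ b} ≤ ENNReal.ofReal (Real.exp b * Z) := by
    have hZl : ENNReal.ofReal Z = ∫⁻ ω, ENNReal.ofReal (Real.exp (-(H ω))) ∂μ :=
      ofReal_integral_eq_lintegral_ofReal hint (ae_of_all _ fun ω => (Real.exp_pos _).le)
    have h1 : ENNReal.ofReal (Real.exp (-b)) * μ {ω | H ω ≤ b} ≤ ENNReal.ofReal Z := by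
      rw [hZl]
      calc ENNReal.ofReal (Real.exp (-b)) * μ {ω | H ω ≤ b}
          = ∫⁻ _ω in {ω | H ω ≤ b}, ENNReal.ofReal (Real.exp (-b)) ∂μ :=
            (setLIntegral_const _ _).symm
        _ ≤ ∫⁻ ω in {ω | H ω ≤ b}, ENNReal.ofReal (Real.exp (-(H ω))) ∂μ := by
            refine setLIntegral_mono' hmeasB fun ω hω => ?_
            exact ENNReal.ofReal_le_ofReal (Real.exp_le_exp.2 (neg_le_neg hω))
        _ ≤ ∫⁻ ω, ENNReal.ofReal (Real.exp (-(H ω))) ∂μ := setLIntegral_le_lintegral _ _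
    calc μ {ω | H ω ≤ b}
        = ENNReal.ofReal (Real.exp b) * (ENNReal.ofReal (Real.exp (-b)) * μ {ω | H ω ≤ b}) := by
          rw [← mul_assoc, ← ENNReal.ofReal_mul (Real.exp_pos _).le, ← Real.exp_add,
            add_neg_cancel, Real.exp_zero, ENNReal.ofReal_one, one_mul]
      _ ≤ ENNReal.ofReal (Real.exp b) * ENNReal.ofReal Z := by gcongr
      _ = ENNReal.ofReal (Real.exp b * Z) :=
          (ENNReal.ofReal_mul (Real.exp_pos _).le).symm
  have key : ν {ω | a ≤ H ω} * μ {ω | H ω ≤ b} ≤ ENNReal.ofReal (Real.exp (-(a - b))) := by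
    calc ν {ω | a ≤ H ω} * μ {ω | H ω ≤ b}
        ≤ ENNReal.ofReal (Z⁻¹ * Real.exp (-a)) * ENNReal.ofReal (Real.exp b * Z) := by
          gcongr
      _ = ENNReal.ofReal (Z⁻¹ * Real.exp (-a) * (Real.exp b * Z)) :=
          (ENNReal.ofReal_mul (by positivity)).symm
      _ = ENNReal.ofReal (Real.exp (-(a - b))) := by
          congr 1
          rw [show -(a - b) = -a + b by ring, Real.exp_add]
          field_simp
  refine ⟨hZpos, key, fun hBpos => ?_⟩
  have hBne := measure_ne_top μ {ω | H ω ≤ b}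
  rw [ENNReal.le_div_iff_mul_le (Or.inl hBpos.ne') (Or.inl hBne)]
  have : Real.exp (b - a) = Real.exp (-(a - b)) := by ring_nf
  rw [this]
  exact key
end

section
/- Let (Y_n)_{n≥1} be real-valued random variables (each on its own probability space) such that E[Y_n] → 0 and E[Y_n²] → 1 as n → ∞, and sup_n E[Y_n⁴] ≤ C for some finite constant C. Then there exist reals u < 0 < v, a real δ > 0 and an index N₀ such that for all n ≥ N₀: P(Y_n < u) ≥ δ and P(Y_n > v) ≥ δ. -/
/-!
Since `y ^ 2 ≤ a * |y| + y ^ 4 / a ^ 2`, a uniform bound on `E[Y⁴]` prevents the second moment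
`E[Y²] ≈ 1` from escaping to large values, which bounds `E|Y|` from below; as `E[Y] → 0`, both
`E[Y⁺] = (E|Y| + E[Y]) / 2` and `E[Y⁻]` are eventually at least some `m > 0`. The AM-GM bound
`y⁺ ≤ v + ε y² + 1{y > v} / (4ε)` turns `E[Y⁺] ≥ m` and `E[Y²] ≤ 5/4` into
`P(Y > m/2) ≥ m² / 5`; the lower tail is the same statement for `-Y`.
-/

open MeasureTheory Filter

lemma sq_le_mul_abs_add_pow_four_div {a : ℝ} (ha : 0 < a) (y : ℝ) :
    y ^ 2 ≤ a * |y| + y ^ 4 / a ^ 2 := by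
  rcases le_total |y| a with h | h
  · have : 0 ≤ y ^ 4 / a ^ 2 := by positivity
    nlinarith [abs_nonneg y, sq_abs y]
  · have : a ^ 2 ≤ y ^ 2 := by nlinarith [abs_nonneg y, sq_abs y]
    have : y ^ 2 ≤ y ^ 4 / a ^ 2 := by
      rw [le_div_iff₀ (by positivity)]; nlinarith [sq_nonneg y]
    nlinarith [mul_nonneg (abs_nonneg y) ha.le]

lemma half_abs_add_le_add_indicator {v ε : ℝ} (hv : 0 ≤ v) (hε : 0 < ε) (y : ℝ) :
    (|y| + y) / 2 ≤ v + ε * y ^ 2 + (Set.Ioi v).indicator 1 y / (4 * ε) := by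
  by_cases hy : v < y
  · rw [Set.indicator_of_mem (show y ∈ Set.Ioi v from hy), Pi.one_apply,
      abs_of_pos (hv.trans_lt hy)]
    have : 0 ≤ ε * y ^ 2 + 1 / (4 * ε) - y := by
      have : ε * y ^ 2 + 1 / (4 * ε) - y = (2 * ε * y - 1) ^ 2 / (4 * ε) := by
        field_simp; ring
      rw [this]; positivity
    linarith
  · rw [Set.indicator_of_notMem (show y ∉ Set.Ioi v from hy), zero_div, add_zero]
    have : |y| + y ≤ 2 * v := by
      rcases le_total y 0 with h | h
      · rw [abs_of_nonpos h]; linarith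
      · rw [abs_of_nonneg h]; linarith [not_lt.1 hy]
    nlinarith [sq_nonneg y]

section

variable {Ω : Type*} [MeasurableSpace Ω] {μ : Measure Ω} {Y : Ω → ℝ}

lemma integral_sq_le_mul_integral_abs_add [IsFiniteMeasure μ] {a : ℝ} (ha : 0 < a)
    (hY : MemLp Y 4 μ) :
    ∫ ω, Y ω ^ 2 ∂μ ≤ a * ∫ ω, |Y ω| ∂μ + (∫ ω, Y ω ^ 4 ∂μ) / a ^ 2 := by
  have hY4 : Integrable (fun ω => Y ω ^ 4) μ := by
    simpa only [Real.norm_eq_abs, Even.pow_abs ⟨2, rfl⟩] using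
      hY.integrable_norm_pow (p := 4) (by norm_num)
  have hYabs : Integrable (fun ω => |Y ω|) μ := (hY.integrable (by norm_num)).abs
  rw [← integral_const_mul, ← integral_div,
    ← integral_add (hYabs.const_mul a) (hY4.div_const _)]
  exact integral_mono (hY.mono_exponent (by norm_num)).integrable_sq
    ((hYabs.const_mul a).add (hY4.div_const _)) fun ω => sq_le_mul_abs_add_pow_four_div ha (Y ω)

lemma half_integral_abs_add_integral_le [IsFiniteMeasure μ] {v ε : ℝ} (hv : 0 ≤ v) (hε : 0 < ε)
    (hY : MemLp Y 2 μ) :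
    (∫ ω, |Y ω| ∂μ + ∫ ω, Y ω ∂μ) / 2
      ≤ v * μ.real Set.univ + ε * ∫ ω, Y ω ^ 2 ∂μ + μ.real {ω | v < Y ω} / (4 * ε) := by
  have hYint : Integrable Y μ := hY.integrable (by norm_num)
  have hS : NullMeasurableSet {ω | v < Y ω} μ :=
    hY.aestronglyMeasurable.aemeasurable.nullMeasurable measurableSet_Ioi
  have hind : ∀ ω, (Set.Ioi v).indicator 1 (Y ω) = {ω | v < Y ω}.indicator (1 : Ω → ℝ) ω :=
    fun ω => (Set.indicator_comp_right (g := (1 : ℝ → ℝ)) Y).symm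
  have hIind : Integrable (fun ω => {ω | v < Y ω}.indicator (1 : Ω → ℝ) ω) μ :=
    (integrable_const 1).indicator₀ hS
  have hquad : Integrable (fun ω => v + ε * Y ω ^ 2) μ :=
    (integrable_const v).add (hY.integrable_sq.const_mul ε)
  calc (∫ ω, |Y ω| ∂μ + ∫ ω, Y ω ∂μ) / 2 = ∫ ω, (|Y ω| + Y ω) / 2 ∂μ := by
        rw [integral_div, integral_add hYint.abs hYint]
    _ ≤ ∫ ω, (v + ε * Y ω ^ 2 + {ω | v < Y ω}.indicator (1 : Ω → ℝ) ω / (4 * ε)) ∂μ := by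
        refine integral_mono ((hYint.abs.add hYint).div_const 2)
          (hquad.add (hIind.div_const _)) fun ω => ?_
        simpa only [hind] using half_abs_add_le_add_indicator hv hε (Y ω)
    _ = _ := by
        rw [integral_add hquad (hIind.div_const _),
          integral_add (integrable_const v) (hY.integrable_sq.const_mul ε), integral_const_mul,
          integral_div, integral_indicator₀ hS]
        simp [mul_comm]

lemma one_div_le_integral_abs [IsFiniteMeasure μ] {a : ℝ} (ha : 0 < a) (hY : MemLp Y 4 μ)
    (hsq : 3 / 4 ≤ ∫ ω, Y ω ^ 2 ∂μ) (h4 : ∫ ω, Y ω ^ 4 ∂μ ≤ a ^ 2 / 4) :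
    1 / (2 * a) ≤ ∫ ω, |Y ω| ∂μ := by
  have h := integral_sq_le_mul_integral_abs_add ha hY
  have : (∫ ω, Y ω ^ 4 ∂μ) / a ^ 2 ≤ 1 / 4 := by
    rw [div_le_iff₀ (by positivity)]; linarith
  rw [div_le_iff₀' (by positivity)]
  linarith

lemma sq_div_five_le_measureReal_gt [IsProbabilityMeasure μ] {m : ℝ} (hm : 0 < m)
    (hY : MemLp Y 2 μ) (hpos : m ≤ (∫ ω, |Y ω| ∂μ + ∫ ω, Y ω ∂μ) / 2)
    (hsq : ∫ ω, Y ω ^ 2 ∂μ ≤ 5 / 4) :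
    m ^ 2 / 5 ≤ μ.real {ω | m / 2 < Y ω} := by
  have h := half_integral_abs_add_integral_le (μ := μ) (half_pos hm).le
    (by positivity : 0 < m / 5) hY
  rw [probReal_univ, mul_one, show 4 * (m / 5) = 4 * m / 5 by ring,
    div_div_eq_mul_div] at h
  have : m / 5 * ∫ ω, Y ω ^ 2 ∂μ ≤ m / 4 := by nlinarith
  have : m / 4 ≤ μ.real {ω | m / 2 < Y ω} * 5 / (4 * m) := by linarith
  rw [le_div_iff₀ (by positivity)] at this
  nlinarith

lemma ofReal_le_measure_gt_of_moments [IsProbabilityMeasure μ] {a : ℝ} (ha : 0 < a)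
    (hY : MemLp Y 4 μ) (hmean : |∫ ω, Y ω ∂μ| < 1 / (4 * a))
    (hsq : |∫ ω, Y ω ^ 2 ∂μ - 1| < 1 / 4) (h4 : ∫ ω, Y ω ^ 4 ∂μ ≤ a ^ 2 / 4) :
    ENNReal.ofReal ((1 / (8 * a)) ^ 2 / 5) ≤ μ {ω | 1 / (8 * a) / 2 < Y ω} := by
  obtain ⟨hsq_lo, hsq_hi⟩ := abs_lt.1 hsq
  have habs := one_div_le_integral_abs ha hY (by linarith) h4
  have hpos : 1 / (8 * a) ≤ (∫ ω, |Y ω| ∂μ + ∫ ω, Y ω ∂μ) / 2 := by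
    have e : 1 / (2 * a) = 4 * (1 / (8 * a)) ∧ 1 / (4 * a) = 2 * (1 / (8 * a)) := by
      constructor <;> field_simp <;> ring
    rw [e.1] at habs; rw [e.2] at hmean
    linarith [neg_abs_le (∫ ω, Y ω ∂μ)]
  exact ENNReal.ofReal_le_of_le_toReal (sq_div_five_le_measureReal_gt (by positivity)
    (hY.mono_exponent (by norm_num)) hpos (by linarith))

end

theorem stmt16 (Ω : ℕ → Type*) [∀ n, MeasurableSpace (Ω n)]
    (P : ∀ n, Measure (Ω n)) [∀ n, IsProbabilityMeasure (P n)]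
    (Y : ∀ n, Ω n → ℝ) (hY : ∀ n, MemLp (Y n) 4 (P n))
    (hmean : Tendsto (fun n => ∫ ω, Y n ω ∂(P n)) atTop (nhds 0))
    (hsq : Tendsto (fun n => ∫ ω, (Y n ω) ^ 2 ∂(P n)) atTop (nhds 1))
    (C : ℝ) (h4 : ∀ n, ∫ ω, (Y n ω) ^ 4 ∂(P n) ≤ C) :
    ∃ (u v δ : ℝ) (N₀ : ℕ), u < 0 ∧ 0 < v ∧ 0 < δ ∧
      ∀ n, N₀ ≤ n →
        ENNReal.ofReal δ ≤ P n {ω | Y n ω < u} ∧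
        ENNReal.ofReal δ ≤ P n {ω | v < Y n ω} := by
  set a := |C| + 1
  have ha : 0 < a := by positivity
  have h4' : ∀ n, ∫ ω, Y n ω ^ 4 ∂(P n) ≤ a ^ 2 / 4 := fun n =>
    (h4 n).trans (by nlinarith [le_abs_self C, sq_nonneg (|C| - 1)])
  have hmean' := Metric.tendsto_nhds.1 hmean (1 / (4 * a)) (by positivity)
  have hsq' := Metric.tendsto_nhds.1 hsq (1 / 4) (by norm_num)
  simp only [Real.dist_eq, sub_zero] at hmean' hsq'
  obtain ⟨N₀, hN₀⟩ := eventually_atTop.1 (hmean'.and hsq')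
  refine ⟨-(1 / (8 * a) / 2), 1 / (8 * a) / 2, (1 / (8 * a)) ^ 2 / 5, N₀, by
    simp only [neg_lt_zero]; positivity, by positivity, by positivity, fun n hn => ⟨?_, ?_⟩⟩
  · have h := ofReal_le_measure_gt_of_moments ha (hY n).neg
      (by simpa only [Pi.neg_apply, integral_neg, abs_neg] using (hN₀ n hn).1)
      (by simpa only [Pi.neg_apply, neg_sq] using (hN₀ n hn).2)
      (by simpa only [Pi.neg_apply, Even.neg_pow ⟨2, rfl⟩] using h4' n)
    simpa only [Pi.neg_apply, lt_neg] using h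
  · exact ofReal_le_measure_gt_of_moments ha (hY n) (hN₀ n hn).1 (hN₀ n hn).2 (h4' n)
end

section
/- Let (X_n)_{n≥1} be square-integrable real random variables on a common probability space such that sup_n E[X_n²] ≤ 1, E[X_n] → 0 as n → ∞, and for each fixed n, Cov(X_n, X_m) → 0 as m → ∞. Then there exists a strictly increasing sequence of indices (m_ℓ)_{ℓ≥1} such that (1/M)·Σ_{ℓ=1}^M X_{m_ℓ} → 0 almost surely as M → ∞. -/
/-! Choose the subsequence greedily, so that its `j`-th term has mean below `2⁻ʲ` and
covariance below `2⁻ʲ` with every earlier term. Its partial sums `S M` then satisfy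
`E[(S M)²] ≤ 5 M`, so `E[(S (K²) / K²)²] ≤ 5 / K²` is summable and `S (K²) / K² → 0` almost
surely. Between consecutive squares `S M` moves by at most `∑_{K² ≤ ℓ < (K+1)²} |Y ℓ|`, whose
normalized second moment is `O(1 / K²)` by Cauchy–Schwarz, so it is negligible as well. -/

open MeasureTheory Filter Finset

theorem abs_sum_range_le_add_sum_Ico_abs (a : ℕ → ℝ) {k M n : ℕ} (hkM : k ≤ M) (hMn : M ≤ n) :
    |∑ ℓ ∈ range M, a ℓ| ≤ |∑ ℓ ∈ range k, a ℓ| + ∑ ℓ ∈ Ico k n, |a ℓ| := by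
  rw [← sum_range_add_sum_Ico a hkM]
  refine (abs_add_le _ _).trans ?_
  gcongr
  exact (abs_sum_le_sum_abs _ _).trans (by gcongr)

theorem Nat.tendsto_sqrt_atTop : Tendsto Nat.sqrt atTop atTop :=
  tendsto_atTop_atTop.2 fun b =>
    ⟨b ^ 2, fun _ hn => (Nat.sqrt_eq' b).ge.trans (Nat.sqrt_le_sqrt hn)⟩

theorem tendsto_inv_mul_sum_range_of_squares {a : ℕ → ℝ}
    (hsq : Tendsto (fun K : ℕ => ((K : ℝ) ^ 2)⁻¹ * ∑ ℓ ∈ range (K ^ 2), a ℓ) atTop (nhds 0))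
    (hblock : Tendsto (fun K : ℕ => ((K : ℝ) ^ 2)⁻¹ * ∑ ℓ ∈ Ico (K ^ 2) ((K + 1) ^ 2), |a ℓ|)
      atTop (nhds 0)) :
    Tendsto (fun M : ℕ => (M : ℝ)⁻¹ * ∑ ℓ ∈ range M, a ℓ) atTop (nhds 0) := by
  have hbound := ((hsq.abs.add hblock).comp Nat.tendsto_sqrt_atTop)
  rw [abs_zero, add_zero] at hbound
  refine squeeze_zero_norm' ?_ hbound
  filter_upwards [eventually_ge_atTop 1] with M hM
  set K := Nat.sqrt M
  have hK : (0 : ℝ) < (K : ℝ) ^ 2 := by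
    have : 0 < K := Nat.sqrt_pos.2 hM
    positivity
  have hKM : ((K : ℝ) ^ 2) ≤ M := by exact_mod_cast Nat.sqrt_le' M
  have hsplit := abs_sum_range_le_add_sum_Ico_abs a (Nat.sqrt_le' M) (Nat.lt_succ_sqrt' M).le
  simp only [Function.comp_apply, Real.norm_eq_abs, abs_mul, abs_inv, Nat.abs_cast, abs_pow]
  rw [← mul_add]
  calc (M : ℝ)⁻¹ * |∑ ℓ ∈ range M, a ℓ|
      ≤ ((K : ℝ) ^ 2)⁻¹ * |∑ ℓ ∈ range M, a ℓ| := by gcongr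
    _ ≤ _ := mul_le_mul_of_nonneg_left hsplit (inv_nonneg.2 hK.le)

theorem ae_summable_norm_of_summable_integral_norm {Ω E : Type*} [MeasurableSpace Ω]
    [NormedAddCommGroup E] {P : Measure Ω} {f : ℕ → Ω → E} (hf : ∀ n, Integrable (f n) P)
    (hs : Summable fun n => ∫ ω, ‖f n ω‖ ∂P) :
    ∀ᵐ ω ∂P, Summable fun n => ‖f n ω‖ := by
  refine summable_norm_of_tsum_eLpNorm_ne_top le_rfl (fun n => (hf n).aestronglyMeasurable) ?_
  simp_rw [eLpNorm_one_eq_lintegral_enorm, ← ofReal_integral_norm_eq_lintegral_enorm (hf _)]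
  exact hs.tsum_ofReal_lt_top.ne

theorem ae_tendsto_zero_of_summable_integral_sq {Ω : Type*} [MeasurableSpace Ω]
    {P : Measure Ω} {Z : ℕ → Ω → ℝ} (hZ : ∀ n, Integrable (fun ω => Z n ω ^ 2) P)
    (hs : Summable fun n => ∫ ω, Z n ω ^ 2 ∂P) :
    ∀ᵐ ω ∂P, Tendsto (fun n => Z n ω) atTop (nhds 0) := by
  have hnorm : ∀ n ω, ‖Z n ω ^ 2‖ = Z n ω ^ 2 := fun n ω => by simp
  filter_upwards [ae_summable_norm_of_summable_integral_norm hZ (by simpa only [hnorm] using hs)]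
    with ω hω
  have hsq := (hω.tendsto_atTop_zero).sqrt
  simp only [hnorm, Real.sqrt_sq_eq_abs, Real.sqrt_zero] at hsq
  exact tendsto_zero_iff_abs_tendsto_zero _ |>.2 hsq

section SecondMoments

variable {Ω : Type*} [MeasurableSpace Ω] {P : Measure Ω}

theorem ae_tendsto_inv_sq_mul_of_integral_sq_le {F : ℕ → Ω → ℝ} (hF : ∀ K, MemLp (F K) 2 P)
    (C : ℝ) (hC : ∀ K, 0 < K → ∫ ω, F K ω ^ 2 ∂P ≤ C * K ^ 2) :
    ∀ᵐ ω ∂P, Tendsto (fun K : ℕ => ((K : ℝ) ^ 2)⁻¹ * F K ω) atTop (nhds 0) := by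
  have hle : ∀ K : ℕ, ∫ ω, (((K : ℝ) ^ 2)⁻¹ * F K ω) ^ 2 ∂P ≤ C * ((K : ℝ) ^ 2)⁻¹ := by
    intro K
    rcases Nat.eq_zero_or_pos K with rfl | hK
    · simp -- both sides vanish, as `(0 : ℝ)⁻¹ = 0`
    simp_rw [mul_pow, integral_const_mul]
    calc (((K : ℝ) ^ 2)⁻¹) ^ 2 * ∫ ω, F K ω ^ 2 ∂P ≤ (((K : ℝ) ^ 2)⁻¹) ^ 2 * (C * K ^ 2) := by
          gcongr; exact hC K hK
      _ = C * ((K : ℝ) ^ 2)⁻¹ := by field_simp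
  refine ae_tendsto_zero_of_summable_integral_sq (fun K => ((hF K).const_mul _).integrable_sq) ?_
  exact .of_nonneg_of_le (fun K => integral_nonneg fun ω => sq_nonneg _) hle
    ((Real.summable_nat_pow_inv.2 one_lt_two).mul_left C)

theorem integral_sq_sum_eq {ι : Type*} (s : Finset ι) {Y : ι → Ω → ℝ}
    (hY : ∀ i, MemLp (Y i) 2 P) :
    ∫ ω, (∑ i ∈ s, Y i ω) ^ 2 ∂P = ∑ i ∈ s, ∑ j ∈ s, ∫ ω, Y i ω * Y j ω ∂P := by
  have hint (i j : ι) : Integrable (fun ω => Y i ω * Y j ω) P := (hY i).integrable_mul (hY j)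
  simp_rw [sq, sum_mul_sum]
  rw [integral_finsetSum _ fun i _ => integrable_finsetSum _ fun j _ => hint i j]
  exact sum_congr rfl fun i _ => integral_finsetSum _ fun j _ => hint i j

theorem integral_sq_sum_abs_le_card_sq {ι : Type*} (s : Finset ι) {Y : ι → Ω → ℝ}
    (hY : ∀ i, MemLp (Y i) 2 P) (hbound : ∀ i, ∫ ω, Y i ω ^ 2 ∂P ≤ 1) :
    ∫ ω, (∑ i ∈ s, |Y i ω|) ^ 2 ∂P ≤ (s.card : ℝ) ^ 2 := by
  have hint : Integrable (fun ω => ∑ i ∈ s, Y i ω ^ 2) P :=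
    integrable_finsetSum _ fun i _ => (hY i).integrable_sq
  calc ∫ ω, (∑ i ∈ s, |Y i ω|) ^ 2 ∂P ≤ ∫ ω, s.card * ∑ i ∈ s, Y i ω ^ 2 ∂P := by
        refine integral_mono_of_nonneg (ae_of_all _ fun ω => sq_nonneg _) (hint.const_mul _)
          (ae_of_all _ fun ω => ?_)
        simpa only [sq_abs] using sq_sum_le_card_mul_sum_sq (s := s) (f := fun i => |Y i ω|)
    _ ≤ s.card * ∑ i ∈ s, (1 : ℝ) := by
        rw [integral_const_mul, integral_finsetSum _ fun i _ => (hY i).integrable_sq]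
        gcongr with i
        exact hbound i
    _ = (s.card : ℝ) ^ 2 := by simp [sq]

theorem ae_tendsto_inv_sq_mul_sum_Ico_abs {Y : ℕ → Ω → ℝ} (hY : ∀ ℓ, MemLp (Y ℓ) 2 P)
    (hbound : ∀ ℓ, ∫ ω, Y ℓ ω ^ 2 ∂P ≤ 1) :
    ∀ᵐ ω ∂P, Tendsto (fun K : ℕ => ((K : ℝ) ^ 2)⁻¹ *
      ∑ ℓ ∈ Ico (K ^ 2) ((K + 1) ^ 2), |Y ℓ ω|) atTop (nhds 0) := by
  refine ae_tendsto_inv_sq_mul_of_integral_sq_le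
    (fun K => memLp_finsetSum _ fun ℓ _ => (hY ℓ).abs) 9 fun K hK => ?_
  have hcard : (Ico (K ^ 2) ((K + 1) ^ 2)).card = 2 * K + 1 := by
    rw [Nat.card_Ico, show (K + 1) ^ 2 = K ^ 2 + (2 * K + 1) by ring, Nat.add_sub_cancel_left]
  refine (integral_sq_sum_abs_le_card_sq _ hY hbound).trans ?_
  have hK' : (1 : ℝ) ≤ K := by exact_mod_cast hK
  rw [hcard]
  push_cast
  nlinarith

theorem integral_mul_le_of_abs_lt {Y : ℕ → Ω → ℝ} (hbound : ∀ ℓ, ∫ ω, Y ℓ ω ^ 2 ∂P ≤ 1)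
    (hmean : ∀ j, |∫ ω, Y j ω ∂P| < (1 / 2) ^ j)
    (hcov : ∀ i j, i < j →
      |∫ ω, Y i ω * Y j ω ∂P - (∫ ω, Y i ω ∂P) * ∫ ω, Y j ω ∂P| < (1 / 2) ^ j) (i j : ℕ) :
    ∫ ω, Y i ω * Y j ω ∂P ≤ (if i = j then 1 else 0) + (1 / 2) ^ i + (1 / 2) ^ j := by
  have hoff : ∀ i j, i < j → ∫ ω, Y i ω * Y j ω ∂P ≤ (1 / 2) ^ i + (1 / 2) ^ j := by
    intro i j hij
    have hprod : (∫ ω, Y i ω ∂P) * ∫ ω, Y j ω ∂P ≤ (1 / 2) ^ i :=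
      calc (∫ ω, Y i ω ∂P) * ∫ ω, Y j ω ∂P ≤ |∫ ω, Y i ω ∂P| * |∫ ω, Y j ω ∂P| := by
            rw [← abs_mul]; exact le_abs_self _
        _ ≤ (1 / 2) ^ i * 1 := by
            gcongr
            · exact (hmean i).le
            · exact (hmean j).le.trans (pow_le_one₀ (by norm_num) (by norm_num))
        _ = (1 / 2) ^ i := mul_one _
    linarith [(abs_lt.1 (hcov i j hij)).2]
  rcases lt_trichotomy i j with h | rfl | h
  · simpa [h.ne] using hoff i j h
  · simp only [if_true, ← sq]
    linarith [hbound i, pow_pos (one_half_pos (α := ℝ)) i]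
  · simp_rw [if_neg h.ne', mul_comm (Y i _)]
    linarith [hoff j i h]

theorem integral_sq_sum_range_le_of_abs_lt {Y : ℕ → Ω → ℝ} (hY : ∀ ℓ, MemLp (Y ℓ) 2 P)
    (hbound : ∀ ℓ, ∫ ω, Y ℓ ω ^ 2 ∂P ≤ 1)
    (hmean : ∀ j, |∫ ω, Y j ω ∂P| < (1 / 2) ^ j)
    (hcov : ∀ i j, i < j →
      |∫ ω, Y i ω * Y j ω ∂P - (∫ ω, Y i ω ∂P) * ∫ ω, Y j ω ∂P| < (1 / 2) ^ j) (M : ℕ) :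
    ∫ ω, (∑ ℓ ∈ range M, Y ℓ ω) ^ 2 ∂P ≤ 5 * M := by
  rw [integral_sq_sum_eq _ hY]
  calc ∑ i ∈ range M, ∑ j ∈ range M, ∫ ω, Y i ω * Y j ω ∂P
      ≤ ∑ i ∈ range M, ∑ j ∈ range M,
          ((if i = j then 1 else 0) + (1 / 2 : ℝ) ^ i + (1 / 2) ^ j) := by
        gcongr with i _ j _
        exact integral_mul_le_of_abs_lt hbound hmean hcov i j
    _ = M + 2 * M * ∑ i ∈ range M, (1 / 2 : ℝ) ^ i := by
        simp only [sum_add_distrib, sum_ite_eq, sum_ite_mem, inter_self,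
          sum_const, card_range, nsmul_eq_mul, mul_one, ← mul_sum]
        ring
    _ ≤ 5 * M := by nlinarith [sum_geometric_two_le M, (Nat.cast_nonneg M : (0 : ℝ) ≤ M)]

end SecondMoments

theorem extraction_forall_succ_of_eventually {p : ℕ → ℕ → ℕ → Prop}
    (h : ∀ j k, ∀ᶠ N in atTop, p j k N) :
    ∃ φ : ℕ → ℕ, StrictMono φ ∧ ∀ j, p j (φ j) (φ (j + 1)) := by
  choose f hf hp using fun j k => ((eventually_gt_atTop k).and (h j k)).exists
  let φ : ℕ → ℕ := fun j => Nat.rec 0 f j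
  exact ⟨φ, strictMono_nat_of_lt_succ fun j => hf j (φ j), fun j => hp j (φ j)⟩

theorem exists_strictMono_abs_lt {u : ℕ → ℝ} (hu : Tendsto u atTop (nhds 0))
    {c : ℕ → ℕ → ℝ} (hc : ∀ n, Tendsto (c n) atTop (nhds 0)) {ε : ℕ → ℝ} (hε : ∀ j, 0 < ε j) :
    ∃ m : ℕ → ℕ, StrictMono m ∧ (∀ j, |u (m j)| < ε j) ∧
      ∀ i j, i < j → |c (m i) (m j)| < ε j := by
  have hsmall {v : ℕ → ℝ} (hv : Tendsto v atTop (nhds 0)) (j : ℕ) :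
      ∀ᶠ N in atTop, |v N| < ε j := by
    simpa [Real.dist_eq] using Metric.tendsto_nhds.1 hv _ (hε j)
  obtain ⟨φ, hφ, hp⟩ := extraction_forall_succ_of_eventually
    (p := fun j k N => |u N| < ε j ∧ ∀ n ≤ k, |c n N| < ε j)
    fun j k => (hsmall hu j).and ((eventually_all_finite (Set.finite_Iic k)).2
      fun n _ => hsmall (hc n) j)
  -- shifting by one makes every earlier term `φ (i + 1)` lie below the threshold `φ j`
  exact ⟨fun j => φ (j + 1), fun i j hij => hφ (Nat.succ_lt_succ hij), fun j => (hp j).1,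
    fun i j hij => (hp j).2 _ (hφ.monotone hij)⟩

theorem stmt17_general {Ω : Type*} [MeasurableSpace Ω] (P : Measure Ω)
    (X : ℕ → Ω → ℝ) (hX : ∀ n, MemLp (X n) 2 P)
    (hbound : ∀ n, ∫ ω, (X n ω) ^ 2 ∂P ≤ 1)
    (hmean : Tendsto (fun n => ∫ ω, X n ω ∂P) atTop (nhds 0))
    (hcov : ∀ n, Tendsto
      (fun m => ∫ ω, X n ω * X m ω ∂P - (∫ ω, X n ω ∂P) * ∫ ω, X m ω ∂P)
      atTop (nhds 0)) :
    ∃ m : ℕ → ℕ, StrictMono m ∧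
      ∀ᵐ ω ∂P, Tendsto
        (fun M : ℕ => (M : ℝ)⁻¹ * ∑ ℓ ∈ Finset.range M, X (m ℓ) ω) atTop (nhds 0) := by
  obtain ⟨m, hm, hmean_m, hcov_m⟩ :=
    exists_strictMono_abs_lt hmean hcov fun j => pow_pos (one_half_pos (α := ℝ)) j
  refine ⟨m, hm, ?_⟩
  have hY : ∀ ℓ, MemLp (X (m ℓ)) 2 P := fun ℓ => hX (m ℓ)
  have hsq := ae_tendsto_inv_sq_mul_of_integral_sq_le
    (fun K => memLp_finsetSum (range (K ^ 2)) fun ℓ _ => hY ℓ) 5 fun K _ => by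
      exact_mod_cast
        integral_sq_sum_range_le_of_abs_lt hY (fun ℓ => hbound (m ℓ)) hmean_m hcov_m (K ^ 2)
  filter_upwards [hsq, ae_tendsto_inv_sq_mul_sum_Ico_abs hY fun ℓ => hbound (m ℓ)] with ω h1 h2
  exact tendsto_inv_mul_sum_range_of_squares h1 h2

theorem stmt17 {Ω : Type*} [MeasurableSpace Ω] (P : Measure Ω) [IsProbabilityMeasure P]
    (X : ℕ → Ω → ℝ) (hX : ∀ n, MemLp (X n) 2 P)
    (hbound : ∀ n, ∫ ω, (X n ω) ^ 2 ∂P ≤ 1)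
    (hmean : Tendsto (fun n => ∫ ω, X n ω ∂P) atTop (nhds 0))
    (hcov : ∀ n, Tendsto
      (fun m => ∫ ω, X n ω * X m ω ∂P - (∫ ω, X n ω ∂P) * ∫ ω, X m ω ∂P)
      atTop (nhds 0)) :
    ∃ m : ℕ → ℕ, StrictMono m ∧
      ∀ᵐ ω ∂P, Tendsto
        (fun M : ℕ => (M : ℝ)⁻¹ * ∑ ℓ ∈ Finset.range M, X (m ℓ) ω) atTop (nhds 0) :=
  stmt17_general P X hX hbound hmean hcov
end

section
/- Let L ≥ 2 be an integer, let F be a finite set with exactly L³ elements, let (w_x)_{x∈F} be i.i.d. standard Gaussian random variables, and set z_x := w_x − L^{−3}·Σ_{y∈F} w_y (so that Σ_{x∈F} z_x = 0 and E[z_x z_y] = δ_{xy} − L^{−3}). Let λ > 0, p ∈ ℝ, r ∈ ℝ with r > −1/2, and define g(t) := e^{p − r·t² − λ·t⁴}. Then for every φ ∈ ℝ: (i) E[∏_{x∈F} g(L^{−1/2}·φ + z_x)] = e^{L³p − L²r·φ² − Lλ·φ⁴}·E[exp(−Σ_{x∈F}(6λL^{−1}φ²·z_x² + 4λL^{−1/2}φ·z_x³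 + λ·z_x⁴ + r·z_x²))]; and (ii) E[∏_{x∈F} g(L^{−1/2}·φ + z_x)] ≤ e^{L³p − L²r·φ² − Lλ·φ⁴}·E[exp(−r·Σ_{x∈F} z_x²)], where the last expectation is finite. -/
open MeasureTheory ProbabilityTheory Filter

/-- The single-scale block fluctuation field `z_x = w_x - L^{-3}·Σ_y w_y`. -/
noncomputable def zBlock (L : ℕ) {Ω F : Type*} [Fintype F]
    (w : F → Ω → ℝ) (x : F) (ω : Ω) : ℝ :=
  w x ω - ((L : ℝ) ^ 3)⁻¹ * ∑ y, w y ω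

lemma gauss_integrable_exp_mul_sq {t : ℝ} (ht : t < 1/2) :
    Integrable (fun y => Real.exp (t * y ^ 2)) (gaussianReal 0 1) := by
  rw [gaussianReal_of_var_ne_zero 0 one_ne_zero,
    integrable_withDensity_iff (measurable_gaussianPDF 0 1)
      (Filter.Eventually.of_forall fun x => ENNReal.ofReal_lt_top)]
  have heq : (fun x : ℝ => Real.exp (t * x ^ 2) * (gaussianPDF 0 1 x).toReal)
      = fun x => (Real.sqrt (2 * Real.pi))⁻¹ * Real.exp (-(1/2 - t) * x ^ 2) := by
    funext x
    rw [gaussianPDF, ENNReal.toReal_ofReal (gaussianPDFReal_nonneg _ _ _), gaussianPDFReal]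
    simp only [NNReal.coe_one, mul_one, sub_zero]
    calc Real.exp (t * x ^ 2) * ((Real.sqrt (2 * Real.pi))⁻¹ * Real.exp (-x ^ 2 / 2))
        = (Real.sqrt (2 * Real.pi))⁻¹ * (Real.exp (t * x ^ 2) * Real.exp (-x ^ 2 / 2)) := by ring
      _ = (Real.sqrt (2 * Real.pi))⁻¹ * Real.exp (t * x ^ 2 + -x ^ 2 / 2) := by
          rw [← Real.exp_add]
      _ = (Real.sqrt (2 * Real.pi))⁻¹ * Real.exp (-(1/2 - t) * x ^ 2) := by ring_nf
  rw [heq]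
  exact (integrable_exp_neg_mul_sq (by linarith)).const_mul _

theorem stmt19 {Ω : Type*} [MeasurableSpace Ω] (P : Measure Ω) [IsProbabilityMeasure P]
    (L : ℕ) (hL : 2 ≤ L)
    (F : Type*) [Fintype F] (hF : Fintype.card F = L ^ 3)
    (w : F → Ω → ℝ) (hmeas : ∀ x, Measurable (w x))
    (hindep : iIndepFun w P)
    (hlaw : ∀ x, Measure.map (w x) P = gaussianReal 0 1)
    (lam p r : ℝ) (hlam : 0 < lam) (hr : -(1 / 2 : ℝ) < r) (φ : ℝ) :
    -- (i) the exact one-step identity (5.1)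
    (∫ ω, ∏ x, Real.exp (p - r * ((L : ℝ) ^ (-(1 : ℝ) / 2) * φ + zBlock L w x ω) ^ 2
          - lam * ((L : ℝ) ^ (-(1 : ℝ) / 2) * φ + zBlock L w x ω) ^ 4) ∂P
      = Real.exp ((L : ℝ) ^ 3 * p - (L : ℝ) ^ 2 * r * φ ^ 2 - (L : ℝ) * lam * φ ^ 4) *
          ∫ ω, Real.exp (-(∑ x,
            (6 * lam * (L : ℝ)⁻¹ * φ ^ 2 * (zBlock L w x ω) ^ 2
              + 4 * lam * (L : ℝ) ^ (-(1 : ℝ) / 2) * φ * (zBlock L w x ω) ^ 3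
              + lam * (zBlock L w x ω) ^ 4
              + r * (zBlock L w x ω) ^ 2))) ∂P) ∧
    -- (ii) the large-field bound
    (∫ ω, ∏ x, Real.exp (p - r * ((L : ℝ) ^ (-(1 : ℝ) / 2) * φ + zBlock L w x ω) ^ 2
          - lam * ((L : ℝ) ^ (-(1 : ℝ) / 2) * φ + zBlock L w x ω) ^ 4) ∂P
      ≤ Real.exp ((L : ℝ) ^ 3 * p - (L : ℝ) ^ 2 * r * φ ^ 2 - (L : ℝ) * lam * φ ^ 4) *
          ∫ ω, Real.exp (-(r * ∑ x, (zBlock L w x ω) ^ 2)) ∂P) ∧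
    Integrable (fun ω => Real.exp (-(r * ∑ x, (zBlock L w x ω) ^ 2))) P := by
  have hLpos : (0:ℝ) < (L:ℝ) := by
    have : 0 < L := lt_of_lt_of_le (by norm_num) hL
    exact_mod_cast this
  have hL3 : ((L:ℝ)^3) ≠ 0 := by positivity
  set c : ℝ := (L : ℝ) ^ (-(1 : ℝ) / 2) with hc
  have hc2 : c ^ 2 = (L:ℝ)⁻¹ := by
    rw [hc, ← Real.rpow_natCast ((L:ℝ) ^ (-(1:ℝ)/2)) 2, ← Real.rpow_mul hLpos.le]
    norm_num [Real.rpow_neg_one]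
  -- measurability of z
  have hzm : ∀ x, Measurable (fun ω => zBlock L w x ω) := fun x =>
    (hmeas x).sub ((Finset.measurable_sum _ fun y _ => hmeas y).const_mul _)
  -- sum of z vanishes
  have hzsum : ∀ ω, ∑ x, zBlock L w x ω = 0 := by
    intro ω
    simp only [zBlock]
    rw [Finset.sum_sub_distrib, Finset.sum_const, Finset.card_univ, hF, nsmul_eq_mul]
    push_cast
    field_simp
    ring
  -- sum of z squared
  have hzsq : ∀ ω, ∑ x, (zBlock L w x ω)^2
      = (∑ x, (w x ω)^2) - ((L:ℝ)^3)⁻¹ * (∑ x, w x ω)^2 := by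
    intro ω
    have e : ∀ x : F, (zBlock L w x ω)^2
        = (w x ω)^2 - (2 * ((L:ℝ)^3)⁻¹ * (∑ y, w y ω)) * w x ω
          + (((L:ℝ)^3)⁻¹)^2 * (∑ y, w y ω)^2 := fun x => by
      simp only [zBlock]; ring
    rw [Finset.sum_congr rfl fun x _ => e x, Finset.sum_add_distrib,
      Finset.sum_sub_distrib, ← Finset.mul_sum, Finset.sum_const, Finset.card_univ, hF,
      nsmul_eq_mul]
    push_cast
    field_simp
    ring
  have hzsq_le : ∀ ω, ∑ x, (zBlock L w x ω)^2 ≤ ∑ x, (w x ω)^2 := by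
    intro ω
    rw [hzsq ω]
    have : 0 ≤ ((L:ℝ)^3)⁻¹ * (∑ x, w x ω)^2 := by positivity
    linarith
  -- the pointwise identity behind (i)
  have hpt : ∀ ω, ∏ x, Real.exp (p - r * (c * φ + zBlock L w x ω) ^ 2
        - lam * (c * φ + zBlock L w x ω) ^ 4)
      = Real.exp ((L : ℝ) ^ 3 * p - (L : ℝ) ^ 2 * r * φ ^ 2 - (L : ℝ) * lam * φ ^ 4) *
        Real.exp (-(∑ x,
          (6 * lam * (L : ℝ)⁻¹ * φ ^ 2 * (zBlock L w x ω) ^ 2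
            + 4 * lam * c * φ * (zBlock L w x ω) ^ 3
            + lam * (zBlock L w x ω) ^ 4
            + r * (zBlock L w x ω) ^ 2))) := by
    intro ω
    rw [← Real.exp_sum, ← Real.exp_add]
    congr 1
    have e1 : ∀ x : F, p - r * (c * φ + zBlock L w x ω) ^ 2
        - lam * (c * φ + zBlock L w x ω) ^ 4
        = (p - r * (L:ℝ)⁻¹ * φ^2 - lam * ((L:ℝ)⁻¹)^2 * φ^4)
          - (2 * r * c * φ + 4 * lam * (L:ℝ)⁻¹ * c * φ^3) * zBlock L w x ω
          - (6 * lam * (L : ℝ)⁻¹ * φ ^ 2 * (zBlock L w x ω) ^ 2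
            + 4 * lam * c * φ * (zBlock L w x ω) ^ 3
            + lam * (zBlock L w x ω) ^ 4
            + r * (zBlock L w x ω) ^ 2) := by
      intro x
      rw [← hc2]
      ring
    rw [Finset.sum_congr rfl fun x _ => e1 x, Finset.sum_sub_distrib, Finset.sum_sub_distrib,
      ← Finset.mul_sum, hzsum ω, mul_zero, sub_zero, Finset.sum_const, Finset.card_univ, hF,
      nsmul_eq_mul]
    push_cast
    field_simp
    congr 1
    exact Finset.sum_congr rfl fun x _ => by ring
  -- part (i)
  have hi : (∫ ω, ∏ x, Real.exp (p - r * (c * φ + zBlock L w x ω) ^ 2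
          - lam * (c * φ + zBlock L w x ω) ^ 4) ∂P)
      = Real.exp ((L : ℝ) ^ 3 * p - (L : ℝ) ^ 2 * r * φ ^ 2 - (L : ℝ) * lam * φ ^ 4) *
          ∫ ω, Real.exp (-(∑ x,
            (6 * lam * (L : ℝ)⁻¹ * φ ^ 2 * (zBlock L w x ω) ^ 2
              + 4 * lam * c * φ * (zBlock L w x ω) ^ 3
              + lam * (zBlock L w x ω) ^ 4
              + r * (zBlock L w x ω) ^ 2))) ∂P := by
    rw [integral_congr_ae (Filter.Eventually.of_forall hpt), integral_const_mul]
  -- integrability of the Gaussian dominating function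
  set t : ℝ := max (-r) 0 with htdef
  have ht2 : t < 1/2 := max_lt (by linarith) (by norm_num)
  have ht0 : 0 ≤ t := le_max_right _ _
  have htr : -r ≤ t := le_max_left _ _
  have hsq : iIndepFun
      (fun x ω => (w x ω)^2) P :=
    hindep.comp (fun _ => fun y : ℝ => y^2) (fun _ => measurable_id.pow_const 2)
  have hint1 : ∀ x : F, Integrable (fun ω => Real.exp (t * (w x ω)^2)) P := by
    intro x
    have h1 : Integrable (fun y : ℝ => Real.exp (t * y^2)) (Measure.map (w x) P) := by
      rw [hlaw x]; exact gauss_integrable_exp_mul_sq ht2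
    have h2 := h1.comp_measurable (hmeas x)
    exact h2
  have hG : Integrable (fun ω => Real.exp (t * ∑ x, (w x ω)^2)) P := by
    have := hsq.integrable_exp_mul_sum (fun x => (hmeas x).pow_const 2)
      (s := Finset.univ) (fun i _ => hint1 i)
    simpa [Finset.sum_apply] using this
  have hZsqm : Measurable (fun ω => ∑ x, (zBlock L w x ω)^2) :=
    Finset.measurable_sum _ fun x _ => (hzm x).pow_const 2
  -- integrability of exp(-r Σ z²)
  have hInt2 : Integrable (fun ω => Real.exp (-(r * ∑ x, (zBlock L w x ω) ^ 2))) P := by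
    apply hG.mono' ((hZsqm.const_mul r).neg.exp.aestronglyMeasurable)
    filter_upwards with ω
    rw [Real.norm_eq_abs, Real.abs_exp]
    apply Real.exp_le_exp.mpr
    have hz0 : 0 ≤ ∑ x, (zBlock L w x ω)^2 := Finset.sum_nonneg fun x _ => sq_nonneg _
    have hw0 : 0 ≤ ∑ x, (w x ω)^2 := Finset.sum_nonneg fun x _ => sq_nonneg _
    have hle := hzsq_le ω
    rcases le_or_gt 0 (-r) with h | h
    · calc -(r * ∑ x, (zBlock L w x ω)^2) = (-r) * ∑ x, (zBlock L w x ω)^2 := by ring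
        _ ≤ (-r) * ∑ x, (w x ω)^2 := by
            exact mul_le_mul_of_nonneg_left hle h
        _ ≤ t * ∑ x, (w x ω)^2 := mul_le_mul_of_nonneg_right htr hw0
    · show -(r * ∑ x, (zBlock L w x ω)^2) ≤ t * ∑ x, (w x ω)^2
      nlinarith
  -- per-term inequality from completing the square
  have hqle : ∀ ω, Real.exp (-(∑ x,
        (6 * lam * (L : ℝ)⁻¹ * φ ^ 2 * (zBlock L w x ω) ^ 2
          + 4 * lam * c * φ * (zBlock L w x ω) ^ 3
          + lam * (zBlock L w x ω) ^ 4
          + r * (zBlock L w x ω) ^ 2)))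
      ≤ Real.exp (-(r * ∑ x, (zBlock L w x ω) ^ 2)) := by
    intro ω
    apply Real.exp_le_exp.mpr
    apply neg_le_neg
    rw [Finset.mul_sum]
    apply Finset.sum_le_sum
    intro x _
    rw [← hc2]
    nlinarith [mul_nonneg hlam.le (sq_nonneg (2*c*φ*(zBlock L w x ω) + (zBlock L w x ω)^2)),
      mul_nonneg hlam.le (sq_nonneg (c*φ*(zBlock L w x ω)))]
  -- measurability and integrability of the (i)-RHS integrand
  have hqm : Measurable (fun ω => ∑ x,
      (6 * lam * (L : ℝ)⁻¹ * φ ^ 2 * (zBlock L w x ω) ^ 2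
        + 4 * lam * c * φ * (zBlock L w x ω) ^ 3
        + lam * (zBlock L w x ω) ^ 4
        + r * (zBlock L w x ω) ^ 2)) :=
    Finset.measurable_sum _ fun x _ =>
      (((((hzm x).pow_const 2).const_mul _).add (((hzm x).pow_const 3).const_mul _)).add
        (((hzm x).pow_const 4).const_mul _)).add (((hzm x).pow_const 2).const_mul _)
  have hInt1 : Integrable (fun ω => Real.exp (-(∑ x,
      (6 * lam * (L : ℝ)⁻¹ * φ ^ 2 * (zBlock L w x ω) ^ 2
        + 4 * lam * c * φ * (zBlock L w x ω) ^ 3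
        + lam * (zBlock L w x ω) ^ 4
        + r * (zBlock L w x ω) ^ 2)))) P := by
    apply hInt2.mono' (hqm.neg.exp.aestronglyMeasurable)
    filter_upwards with ω
    rw [Real.norm_eq_abs, Real.abs_exp]
    exact hqle ω
  refine ⟨hi, ?_, hInt2⟩
  rw [hi]
  exact mul_le_mul_of_nonneg_left (integral_mono hInt1 hInt2 fun ω => hqle ω)
    (Real.exp_pos _).le
end
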